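/- arXiv:2310.04527 — 3 statements merged into one kernel-verified Lean document; each statement's English description precedes it below -/
import Mathlib

section
/- For an odd prime p, the index of the subgroup generated by -1 and 2 in F_p^* equals (p-1)/(2·ord_p(4)). -/
theorem stmt_1 (p : ℕ) (hp : p.Prime) (hodd : p ≠ 2)
    (u : (ZMod p)ˣ) (hu : (u : ZMod p) = 2) :
    (Subgroup.closure ({-1, u} : Set (ZMod p)ˣ)).index = (p - 1) / (2 * orderOf (4 : ZMod p)) := by
  haveI : Fact p.Prime := ⟨hp⟩
  have hplt : 2 < p := lt_of_le_of_ne hp.two_le (Ne.symm hodd)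
  haveI : Fact (2 < p) := ⟨hplt⟩
  have h4 : (4 : ZMod p) = ((u ^ 2 : (ZMod p)ˣ) : ZMod p) := by
    push_cast [hu]; ring
  have hord4 : orderOf (4 : ZMod p) = orderOf (u ^ 2) := by
    rw [h4, orderOf_units]
  have hm : 0 < orderOf u := orderOf_pos u
  have hcard : Nat.card (ZMod p)ˣ = p - 1 := by
    simp [Nat.card_eq_fintype_card, ZMod.card_units_eq_totient, Nat.totient_prime hp]
  have hne : (-1 : (ZMod p)ˣ) ≠ 1 := by
    intro h
    have h2 : ((-1 : (ZMod p)ˣ) : ZMod p) = ((1 : (ZMod p)ˣ) : ZMod p) := by rw [h]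
    push_cast at h2
    exact ZMod.neg_one_ne_one h2
  have hsq : ∀ x : (ZMod p)ˣ, x ^ 2 = 1 → x = 1 ∨ x = -1 := by
    intro x hx
    have hx' : (x : ZMod p) * x = 1 := by
      have := congrArg Units.val hx
      push_cast at this
      linear_combination this
    rcases mul_self_eq_one_iff.mp hx' with h | h
    · left; exact Units.ext h
    · right; ext; simpa using h
  set m := orderOf u with hmdef
  have hmdvd : m ∣ p - 1 := by
    rw [← hcard]; exact orderOf_dvd_natCard u
  rcases Nat.even_or_odd m with he | ho
  · -- even case: -1 = u^(m/2), closure = zpowers u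
    have h2m : 2 ∣ m := he.two_dvd
    have hv2 : (u ^ (m / 2)) ^ 2 = 1 := by
      rw [← pow_mul, Nat.div_mul_cancel h2m, pow_orderOf_eq_one]
    have hvne : u ^ (m / 2) ≠ 1 := by
      intro h
      have hd := orderOf_dvd_of_pow_eq_one h
      rw [← hmdef] at hd
      have hlt : m / 2 < m := Nat.div_lt_self hm (by norm_num)
      have hpos : 0 < m / 2 := Nat.div_pos (Nat.le_of_dvd hm h2m) (by norm_num)
      exact absurd (Nat.le_of_dvd hpos hd) (not_le.mpr hlt)
    have hveq : u ^ (m / 2) = -1 := (hsq _ hv2).resolve_left hvne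
    have hcl : Subgroup.closure ({-1, u} : Set (ZMod p)ˣ) = Subgroup.zpowers u := by
      apply le_antisymm
      · rw [Subgroup.closure_le]
        rintro x hx
        rcases hx with rfl | rfl
        · exact Subgroup.mem_zpowers_iff.mpr ⟨((m / 2 : ℕ) : ℤ), by rw [zpow_natCast, hveq]⟩
        · exact Subgroup.mem_zpowers _
      · rw [Subgroup.zpowers_le]
        exact Subgroup.subset_closure (by simp)
    have hlag := Subgroup.card_mul_index (Subgroup.zpowers u)
    rw [Nat.card_zpowers, hcard, ← hmdef] at hlag
    have hrhs : 2 * orderOf (4 : ZMod p) = m := by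
      rw [hord4, orderOf_pow, ← hmdef, Nat.gcd_comm, Nat.gcd_eq_left h2m]
      omega
    rw [hcl, hrhs]
    exact (Nat.div_eq_of_eq_mul_left hm (by rw [mul_comm]; exact hlag.symm)).symm
  · -- odd case: closure = zpowers (-u)
    have hcop : Nat.Coprime 2 m := Nat.coprime_two_left.mpr ho
    have hord2 : orderOf (-1 : (ZMod p)ˣ) = 2 := by
      apply orderOf_eq_prime
      · ext; push_cast; ring
      · exact hne
    have hordg : orderOf (-u) = 2 * m := by
      rw [← neg_one_mul]
      rw [(Commute.all (-1 : (ZMod p)ˣ) u).orderOf_mul_eq_mul_orderOf_of_coprime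
        (by rw [hord2, ← hmdef]; exact hcop), hord2, ← hmdef]
    have hcl : Subgroup.closure ({-1, u} : Set (ZMod p)ˣ) = Subgroup.zpowers (-u) := by
      apply le_antisymm
      · rw [Subgroup.closure_le]
        rintro x hx
        rcases hx with rfl | rfl
        · refine Subgroup.mem_zpowers_iff.mpr ⟨((m : ℕ) : ℤ), ?_⟩
          rw [zpow_natCast, neg_pow, pow_orderOf_eq_one, ho.neg_one_pow, mul_one]
        · refine Subgroup.mem_zpowers_iff.mpr ⟨((m + 1 : ℕ) : ℤ), ?_⟩
          rw [zpow_natCast, neg_pow]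
          have hev : Even (m + 1) := ho.add_one
          rw [hev.neg_one_pow, one_mul, pow_succ, pow_orderOf_eq_one, one_mul]
      · rw [Subgroup.zpowers_le]
        have h1 : (-1 : (ZMod p)ˣ) ∈ Subgroup.closure ({-1, u} : Set (ZMod p)ˣ) :=
          Subgroup.subset_closure (by simp)
        have h2 : u ∈ Subgroup.closure ({-1, u} : Set (ZMod p)ˣ) :=
          Subgroup.subset_closure (by simp)
        have := mul_mem h1 h2
        rwa [neg_one_mul] at this
    have hlag := Subgroup.card_mul_index (Subgroup.zpowers (-u))
    rw [Nat.card_zpowers, hcard, hordg] at hlag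
    have hrhs : 2 * orderOf (4 : ZMod p) = 2 * m := by
      rw [hord4, orderOf_pow, ← hmdef, Nat.Coprime.gcd_eq_one hcop.symm, Nat.div_one]
    rw [hcl, hrhs]
    exact (Nat.div_eq_of_eq_mul_left (by omega) (by rw [mul_comm]; exact hlag.symm)).symm
end

section
/- Under the density assumptions, the ratio r = (∑_{ℓ prime, ℓ ≥ 3} d_ℓ)/(∑_{ℓ ≥ 3} d_ℓ) satisfies r ≤ [ (3/2)A·(1/15 + 1/95 + (49/41)(P(3) - 1/8 - 1/27 - 1/125) + P(2) - 1/4) ] / (1 - (7/4)A). -/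
/-!
For a prime `p` one has `Q p = 1/p² + 1/(p(p² - p - 1))`, and for `p ≥ 7` the second term is at most
`(49/41)/p³`, with equality at `p = 7` since `7² - 7 - 1 = 41`. The sum of `d` over `ℓ ≥ 3` is
`1 - d 1 - d 2 = 1 - (7/4)A`, while the sum over the odd primes is `d 3 + d 5` plus a tail over the
primes `p ≥ 7`, bounded termwise by `(3/2)A (1/p² + (49/41)/p³)`. Comparing with `P(2)` and `P(3)`
from which the primes `2, 3, 5` are removed gives the bound.
-/

noncomputable def Q (ℓ : ℕ) : ℝ :=
  (1 / (ℓ : ℝ) ^ 2) * ∏ q ∈ ℓ.primeFactors, (((q : ℝ) ^ 2 - 1) / ((q : ℝ) ^ 2 - q - 1))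

theorem Summable.tsum_insert {α β : Type*} [AddCommMonoid α] [TopologicalSpace α] [ContinuousAdd α]
    [T2Space α] {f : β → α} {s : Set β} {a : β} (ha : a ∉ s) (hf : Summable fun x : s ↦ f x) :
    ∑' x : ↑(insert a s), f x = f a + ∑' x : s, f x := by
  rw [Set.insert_eq, Summable.tsum_union_disjoint (Set.disjoint_singleton_left.mpr ha)
    ((Set.finite_singleton a).summable f) hf, tsum_singleton]

section Splitting

variable {f : ℕ → ℝ}

theorem tsum_one_le_eq_add_tsum_three_le (hf : Summable f) :
    ∑' n : {n : ℕ // 1 ≤ n}, f n = f 1 + f 2 + ∑' n : {n : ℕ // 3 ≤ n}, f n := by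
  have hset : {n : ℕ | 1 ≤ n} = insert 1 (insert 2 {n | 3 ≤ n}) := by
    ext n; simp only [Set.mem_ofPred_eq, Set.mem_insert_iff]; omega
  change ∑' n : ↥{n : ℕ | 1 ≤ n}, f n = _
  rw [hset, Summable.tsum_insert (by simp) (hf.subtype _), Summable.tsum_insert (by simp)
    (hf.subtype _), add_assoc]
  rfl

theorem tsum_primes_eq_add_tsum_primes_three_le (hf : Summable f) :
    ∑' p : {p : ℕ // p.Prime}, f p = f 2 + ∑' p : {p : ℕ // p.Prime ∧ 3 ≤ p}, f p := by
  have hset : {p : ℕ | p.Prime} = insert 2 {p | p.Prime ∧ 3 ≤ p} := by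
    ext p
    simp only [Set.mem_ofPred_eq, Set.mem_insert_iff]
    constructor
    · intro hp
      rcases hp.eq_two_or_odd' with h | h
      · exact Or.inl h
      · exact Or.inr ⟨hp, by have := hp.two_le; rcases h with ⟨k, rfl⟩; omega⟩
    · rintro (rfl | ⟨hp, -⟩)
      exacts [Nat.prime_two, hp]
  change ∑' p : ↥{p : ℕ | p.Prime}, f p = _
  rw [hset, Summable.tsum_insert (by simp) (hf.subtype _)]
  rfl

theorem tsum_primes_three_le_eq_add_tsum_primes_seven_le (hf : Summable f) :
    ∑' p : {p : ℕ // p.Prime ∧ 3 ≤ p}, f p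
      = f 3 + f 5 + ∑' p : {p : ℕ // p.Prime ∧ 7 ≤ p}, f p := by
  have hset : {p : ℕ | p.Prime ∧ 3 ≤ p} = insert 3 (insert 5 {p | p.Prime ∧ 7 ≤ p}) := by
    ext p
    simp only [Set.mem_ofPred_eq, Set.mem_insert_iff]
    constructor
    · rintro ⟨hp, h3⟩
      by_cases h7 : 7 ≤ p
      · exact Or.inr (Or.inr ⟨hp, h7⟩)
      interval_cases p <;> simp_all <;> norm_num at hp
    · rintro (rfl | rfl | ⟨hp, h7⟩)
      exacts [⟨Nat.prime_three, le_rfl⟩, ⟨by norm_num, by norm_num⟩, ⟨hp, by omega⟩]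
  change ∑' p : ↥{p : ℕ | p.Prime ∧ 3 ≤ p}, f p = _
  rw [hset, Summable.tsum_insert (by simp) (hf.subtype _), Summable.tsum_insert (by simp)
    (hf.subtype _), add_assoc]
  rfl

end Splitting

theorem Q_prime {p : ℕ} (hp : p.Prime) :
    Q p = 1 / (p : ℝ) ^ 2 + 1 / (p * ((p : ℝ) ^ 2 - p - 1)) := by
  have h2 : (2 : ℝ) ≤ p := by exact_mod_cast hp.two_le
  have hpos : (0 : ℝ) < (p : ℝ) ^ 2 - p - 1 := by nlinarith
  rw [Q, hp.primeFactors, Finset.prod_singleton, div_add_div _ _ (by positivity) (by positivity),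
    div_mul_div_comm, div_eq_div_iff (by positivity) (by positivity)]
  ring

theorem one_div_mul_sq_sub_sub_one_le {x : ℝ} (hx : 7 ≤ x) :
    1 / (x * (x ^ 2 - x - 1)) ≤ 49 / 41 * (1 / x ^ 3) := by
  have hpos : 0 < x ^ 2 - x - 1 := by nlinarith
  rw [show 49 / 41 * (1 / x ^ 3) = 49 / (41 * x ^ 3) by ring,
    div_le_div_iff₀ (by positivity) (by positivity)]
  nlinarith [mul_nonneg (by linarith : (0 : ℝ) ≤ x - 7) (by linarith : (0 : ℝ) ≤ 8 * x + 7)]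

theorem Q_prime_le {p : ℕ} (hp : p.Prime) (h7 : 7 ≤ p) :
    Q p ≤ 1 / (p : ℝ) ^ 2 + 49 / 41 * (1 / (p : ℝ) ^ 3) := by
  rw [Q_prime hp]
  gcongr
  exact one_div_mul_sq_sub_sub_one_le (by exact_mod_cast h7)

theorem stmt_17_general (A : ℝ) (hA : 0 < A) (hA' : 0 < 1 - (7 / 4) * A) (d : ℕ → ℝ)
    (hodd : ∀ ℓ : ℕ, 1 ≤ ℓ → Odd ℓ → d ℓ = (3 / 2) * A * Q ℓ)
    (h2mod4 : ∀ ℓ : ℕ, ℓ % 4 = 2 → d ℓ = (1 / 3) * A * Q ℓ)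
    (hsummable : Summable (fun ℓ : {n : ℕ // 1 ≤ n} => d ℓ.1))
    (hsum : (∑' ℓ : {n : ℕ // 1 ≤ n}, d ℓ.1) = 1) :
    (∑' ℓ : {n : ℕ // n.Prime ∧ 3 ≤ n}, d ℓ.1) / (∑' ℓ : {n : ℕ // 3 ≤ n}, d ℓ.1)
      ≤ ((3 / 2) * A * (1 / 15 + 1 / 95
          + (49 / 41) * ((∑' p : {p : ℕ // p.Prime}, 1 / (p.1 : ℝ) ^ 3)
              - 1 / 8 - 1 / 27 - 1 / 125)
          + (∑' p : {p : ℕ // p.Prime}, 1 / (p.1 : ℝ) ^ 2) - 1 / 4))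
        / (1 - (7 / 4) * A) := by
  have hd : Summable d := summable_subtype_and_compl.mp
    ⟨hsummable, ((Set.finite_Iio 1).subset fun _ hn ↦ not_le.mp hn).summable d⟩
  have hu2 : Summable fun n : ℕ ↦ 1 / (n : ℝ) ^ 2 := Real.summable_one_div_nat_pow.mpr one_lt_two
  have hu3 : Summable fun n : ℕ ↦ 1 / (n : ℝ) ^ 3 := Real.summable_one_div_nat_pow.mpr (by norm_num)
  have hden : ∑' ℓ : {n : ℕ // 3 ≤ n}, d ℓ = 1 - 7 / 4 * A := by
    have h := tsum_one_le_eq_add_tsum_three_le hd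
    rw [hsum, hodd 1 le_rfl odd_one, h2mod4 2 rfl, Q_prime Nat.prime_two] at h
    norm_num [Q] at h
    linarith
  have htail : ∑' p : {p : ℕ // p.Prime ∧ 7 ≤ p}, d p
      ≤ 3 / 2 * A * (∑' p : {p : ℕ // p.Prime ∧ 7 ≤ p}, 1 / (p : ℝ) ^ 2
        + 49 / 41 * ∑' p : {p : ℕ // p.Prime ∧ 7 ≤ p}, 1 / (p : ℝ) ^ 3) := by
    have hu2' : Summable fun p : {p : ℕ // p.Prime ∧ 7 ≤ p} ↦ 1 / (p : ℝ) ^ 2 := hu2.subtype _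
    have hu3' : Summable fun p : {p : ℕ // p.Prime ∧ 7 ≤ p} ↦ 1 / (p : ℝ) ^ 3 := hu3.subtype _
    calc ∑' p : {p : ℕ // p.Prime ∧ 7 ≤ p}, d p
        ≤ ∑' p : {p : ℕ // p.Prime ∧ 7 ≤ p},
            3 / 2 * A * (1 / (p : ℝ) ^ 2 + 49 / 41 * (1 / (p : ℝ) ^ 3)) := by
          refine Summable.tsum_le_tsum (fun ⟨p, hp, h7⟩ ↦ ?_) (hd.subtype _)
            ((hu2'.add (hu3'.mul_left _)).mul_left _)
          rw [hodd p (by omega) (hp.odd_of_ne_two (by omega))]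
          exact mul_le_mul_of_nonneg_left (Q_prime_le hp h7) (by positivity)
      _ = _ := by rw [tsum_mul_left, hu2'.tsum_add (hu3'.mul_left _), tsum_mul_left]
  have hd3 : d 3 = 3 / 2 * A * (1 / 9 + 1 / 15) := by
    rw [hodd 3 (by norm_num) ⟨1, rfl⟩, Q_prime Nat.prime_three]; norm_num
  have hd5 : d 5 = 3 / 2 * A * (1 / 25 + 1 / 95) := by
    rw [hodd 5 (by norm_num) ⟨2, rfl⟩, Q_prime (by norm_num)]; norm_num
  rw [hden, div_le_div_iff_of_pos_right hA', tsum_primes_three_le_eq_add_tsum_primes_seven_le hd,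
    hd3, hd5, tsum_primes_eq_add_tsum_primes_three_le hu2,
    tsum_primes_three_le_eq_add_tsum_primes_seven_le hu2, tsum_primes_eq_add_tsum_primes_three_le hu3,
    tsum_primes_three_le_eq_add_tsum_primes_seven_le hu3]
  linarith

theorem stmt_17 (A : ℝ) (hA : 0 < A) (hA' : 0 < 1 - (7 / 4) * A) (d : ℕ → ℝ)
    (hodd : ∀ ℓ : ℕ, 1 ≤ ℓ → Odd ℓ → d ℓ = (3 / 2) * A * Q ℓ)
    (h2mod4 : ∀ ℓ : ℕ, ℓ % 4 = 2 → d ℓ = (1 / 3) * A * Q ℓ)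
    (h4 : ∀ ℓ : ℕ, 4 ∣ ℓ → d ℓ = A * Q ℓ)
    (hsummable : Summable (fun ℓ : {n : ℕ // 1 ≤ n} => d ℓ.1))
    (hsum : (∑' ℓ : {n : ℕ // 1 ≤ n}, d ℓ.1) = 1) :
    (∑' ℓ : {n : ℕ // n.Prime ∧ 3 ≤ n}, d ℓ.1) / (∑' ℓ : {n : ℕ // 3 ≤ n}, d ℓ.1)
      ≤ ((3 / 2) * A * (1 / 15 + 1 / 95
          + (49 / 41) * ((∑' p : {p : ℕ // p.Prime}, 1 / (p.1 : ℝ) ^ 3)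
              - 1 / 8 - 1 / 27 - 1 / 125)
          + (∑' p : {p : ℕ // p.Prime}, 1 / (p.1 : ℝ) ^ 2) - 1 / 4))
        / (1 - (7 / 4) * A) :=
  stmt_17_general A hA hA' d hodd h2mod4 hsummable hsum
end

section
/- Under the density assumptions, for every integer m ≥ 3 the ratio r = (∑_{ℓ prime, ℓ ≥ 3} d_ℓ)/(∑_{ℓ ≥ 3} d_ℓ) satisfies r > L(m) := (3/2)A·( ∑_{ℓ prime, 3 ≤ ℓ ≤ m} (Q(ℓ) - 1/ℓ²) + P(2) - 1/4 ) / (1 - (7/4)A), and L(m) is nondecreasing in m. -/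
lemma Q_pos {ℓ : ℕ} (h : 1 ≤ ℓ) : 0 < Q ℓ := by
  have hl : (0:ℝ) < ℓ := by exact_mod_cast h
  apply mul_pos (by positivity)
  refine Finset.prod_pos fun q hq => ?_
  have hq2 : (2:ℝ) ≤ q := by exact_mod_cast (Nat.prime_of_mem_primeFactors hq).two_le
  exact div_pos (by nlinarith) (by nlinarith)

lemma Q_prime_gt {ℓ : ℕ} (hp : ℓ.Prime) : 1 / (ℓ:ℝ)^2 < Q ℓ := by
  have h2 : (2:ℝ) ≤ ℓ := by exact_mod_cast hp.two_le
  rw [Q, hp.primeFactors, Finset.prod_singleton]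
  have hd : (0:ℝ) < (ℓ:ℝ)^2 - ℓ - 1 := by nlinarith
  have hinv : (0:ℝ) < 1 / (ℓ:ℝ)^2 := by positivity
  have h1 : (1:ℝ) < ((ℓ:ℝ)^2 - 1)/((ℓ:ℝ)^2 - ℓ - 1) := by
    rw [lt_div_iff₀ hd]; nlinarith
  nlinarith

theorem stmt_18 (A : ℝ) (hA : 0 < A) (hA' : A < 4 / 7) (d : ℕ → ℝ)
    (hodd : ∀ ℓ : ℕ, 1 ≤ ℓ → Odd ℓ → d ℓ = (3 / 2) * A * Q ℓ)
    (h2mod4 : ∀ ℓ : ℕ, ℓ % 4 = 2 → d ℓ = (1 / 3) * A * Q ℓ)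
    (h4 : ∀ ℓ : ℕ, 4 ∣ ℓ → d ℓ = A * Q ℓ)
    (hsummable : Summable (fun ℓ : {n : ℕ // 1 ≤ n} => d ℓ.1))
    (hsum : (∑' ℓ : {n : ℕ // 1 ≤ n}, d ℓ.1) = 1)
    (L : ℕ → ℝ)
    (hL : ∀ m : ℕ, L m = (3 / 2) * A *
        ((∑ ℓ ∈ (Finset.Icc 3 m).filter Nat.Prime, (Q ℓ - 1 / (ℓ : ℝ) ^ 2))
          + (∑' p : {p : ℕ // p.Prime}, 1 / (p.1 : ℝ) ^ 2) - 1 / 4)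
        / (1 - (7 / 4) * A)) :
    (∀ m : ℕ, 3 ≤ m →
      (∑' ℓ : {n : ℕ // n.Prime ∧ 3 ≤ n}, d ℓ.1) / (∑' ℓ : {n : ℕ // 3 ≤ n}, d ℓ.1) > L m) ∧
    (∀ m₁ m₂ : ℕ, 3 ≤ m₁ → m₁ ≤ m₂ → L m₁ ≤ L m₂) := by
  classical
  set S1 : Set ℕ := {n | 1 ≤ n} with hS1def
  set S3 : Set ℕ := {n | 3 ≤ n} with hS3def
  set SP : Set ℕ := {n | n.Prime ∧ 3 ≤ n} with hSPdef
  set Pr : Set ℕ := {p | p.Prime} with hPrdef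
  have hden : (0:ℝ) < 1 - 7/4 * A := by linarith
  have hQ1 : Q 1 = 1 := by simp [Q]
  have hQ2 : Q 2 = 3/4 := by
    rw [Q, Nat.Prime.primeFactors Nat.prime_two, Finset.prod_singleton]
    norm_num
  have hd1 : d 1 = 3/2 * A := by
    rw [hodd 1 le_rfl ⟨0, by norm_num⟩, hQ1, mul_one]
  have hd2 : d 2 = 1/4 * A := by
    rw [h2mod4 2 rfl, hQ2]; ring
  -- summabilities
  have hs1 : Summable (S1.indicator d) := summable_subtype_iff_indicator.mp hsummable
  have hSPsub : SP ⊆ S1 := fun n hn => by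
    have := hn.2; simp only [hS1def, Set.mem_setOf_eq]; omega
  have hS3sub : S3 ⊆ S1 := fun n hn => by
    simp only [hS1def, Set.mem_setOf_eq]
    simp only [hS3def, Set.mem_setOf_eq] at hn; omega
  have hsSP : Summable (SP.indicator d) := by
    have h := hs1.indicator SP
    rwa [Set.indicator_indicator, Set.inter_eq_left.mpr hSPsub] at h
  have hsS3 : Summable (S3.indicator d) := by
    have h := hs1.indicator S3
    rwa [Set.indicator_indicator, Set.inter_eq_left.mpr hS3sub] at h
  -- d on SP equals (3/2)A Q
  have hdQ : SP.indicator d = fun n => 3/2 * A * SP.indicator Q n := by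
    funext n
    by_cases h : n ∈ SP
    · rw [Set.indicator_of_mem h, Set.indicator_of_mem h]
      have hn3 : 3 ≤ n := h.2
      exact hodd n (by omega) (h.1.odd_of_ne_two (by omega))
    · simp [Set.indicator_of_notMem h]
  have hsQ : Summable (SP.indicator Q) := by
    have h := hsSP
    rw [hdQ] at h
    exact (summable_mul_left_iff (a := 3/2 * A) (by positivity)).mp h
  have hsinv : Summable (fun n : ℕ => 1/(n:ℝ)^2) :=
    Real.summable_one_div_nat_pow.mpr one_lt_two
  have hsinvSP : Summable (SP.indicator fun n : ℕ => 1/(n:ℝ)^2) := hsinv.indicator SP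
  have hsinvPr : Summable (Pr.indicator fun n : ℕ => 1/(n:ℝ)^2) := hsinv.indicator Pr
  set g : ℕ → ℝ := fun n => Q n - 1/(n:ℝ)^2 with hgdef
  have hindg : SP.indicator g =
      fun n => SP.indicator Q n - SP.indicator (fun n : ℕ => 1/(n:ℝ)^2) n := by
    funext n
    by_cases h : n ∈ SP <;> simp [Set.indicator, h, hgdef]
  have hsg : Summable (SP.indicator g) := by
    rw [hindg]; exact hsQ.sub hsinvSP
  -- the prime zeta value
  set P2 : ℝ := ∑' p : {p : ℕ // p.Prime}, 1 / (p.1 : ℝ) ^ 2 with hP2def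
  have hPrsplit : Pr.indicator (fun n : ℕ => 1/(n:ℝ)^2) =
      fun n => SP.indicator (fun n : ℕ => 1/(n:ℝ)^2) n + (if n = 2 then (1/4:ℝ) else 0) := by
    funext n
    by_cases hn2 : n = 2
    · subst hn2
      have h2P : (2:ℕ) ∈ Pr := Nat.prime_two
      have h2SP : (2:ℕ) ∉ SP := by
        simp only [hSPdef, Set.mem_setOf_eq]; omega
      rw [Set.indicator_of_mem h2P, Set.indicator_of_notMem h2SP, if_pos rfl]
      norm_num
    · by_cases hp : n.Prime
      · have h3 : (3:ℕ) ≤ n := by have := hp.two_le; omega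
        rw [Set.indicator_of_mem (show n ∈ Pr from hp),
          Set.indicator_of_mem (show n ∈ SP from ⟨hp, h3⟩), if_neg hn2, add_zero]
      · have hnP : n ∉ Pr := hp
        have hnSP : n ∉ SP := fun h => hp h.1
        rw [Set.indicator_of_notMem hnP, Set.indicator_of_notMem hnSP, if_neg hn2, add_zero]
  have hsite2 : Summable (fun n : ℕ => if n = 2 then (1/4:ℝ) else 0) :=
    (hasSum_ite_eq 2 (1/4 : ℝ)).summable
  have hP2val : P2 = (∑' n, SP.indicator (fun n : ℕ => 1/(n:ℝ)^2) n) + 1/4 := by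
    have h0 : P2 = ∑' n, Pr.indicator (fun n : ℕ => 1/(n:ℝ)^2) n := by
      rw [hP2def]; exact tsum_subtype Pr (fun n : ℕ => 1/(n:ℝ)^2)
    rw [h0, hPrsplit, Summable.tsum_add hsinvSP hsite2, tsum_ite_eq]
  -- denominator value
  have hsplit : S1.indicator d =
      fun n => S3.indicator d n + ((if n = 1 then d 1 else 0) + (if n = 2 then d 2 else 0)) := by
    funext n
    simp only [Set.indicator_apply, hS1def, hS3def, Set.mem_setOf_eq]
    rcases n with _ | _ | _ | n
    · rw [if_neg (by omega), if_neg (by omega), if_neg (by omega), if_neg (by omega)]; ring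
    · rw [if_pos (by omega), if_neg (by omega), if_pos (by omega), if_neg (by omega)]; ring
    · rw [if_pos (by omega), if_neg (by omega), if_neg (by omega), if_pos (by omega)]; ring
    · rw [if_pos (by omega), if_pos (by omega), if_neg (by omega), if_neg (by omega)]; ring
  have hsite1 : Summable (fun n : ℕ => if n = 1 then d 1 else 0) :=
    (hasSum_ite_eq 1 (d 1)).summable
  have hsite2' : Summable (fun n : ℕ => if n = 2 then d 2 else 0) :=
    (hasSum_ite_eq 2 (d 2)).summable
  have hDval : (∑' n, S3.indicator d n) = 1 - 7/4 * A := by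
    have h1 : (∑' n, S1.indicator d n) = 1 := by
      rw [← tsum_subtype]; exact hsum
    rw [hsplit, Summable.tsum_add hsS3 (hsite1.add hsite2'), Summable.tsum_add hsite1 hsite2',
      tsum_ite_eq, tsum_ite_eq, hd1, hd2] at h1
    linarith
  -- numerator value
  have hNval : (∑' n, SP.indicator d n)
      = 3/2 * A * ((∑' n, SP.indicator g n) + (P2 - 1/4)) := by
    have hQsplit : SP.indicator Q =
        fun n => SP.indicator g n + SP.indicator (fun n : ℕ => 1/(n:ℝ)^2) n := by
      funext n; rw [hindg]; ring
    rw [hdQ, tsum_mul_left, hQsplit, Summable.tsum_add hsg hsinvSP]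
    have : (∑' n, SP.indicator (fun n : ℕ => 1/(n:ℝ)^2) n) = P2 - 1/4 := by
      rw [hP2val]; ring
    rw [this]
  have hgnonneg : ∀ i, 0 ≤ SP.indicator g i := by
    intro i
    apply Set.indicator_nonneg
    intro j hj
    exact le_of_lt (sub_pos.mpr (Q_prime_gt hj.1))
  constructor
  · intro m hm
    have eN : (∑' ℓ : {n : ℕ // n.Prime ∧ 3 ≤ n}, d ℓ.1) = ∑' n, SP.indicator d n :=
      tsum_subtype SP d
    have eD : (∑' ℓ : {n : ℕ // 3 ≤ n}, d ℓ.1) = ∑' n, S3.indicator d n :=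
      tsum_subtype S3 d
    -- strict lower bound on the tail sum
    obtain ⟨p, hpm, hpp⟩ := Nat.exists_infinite_primes (m + 1)
    set s : Finset ℕ := (Finset.Icc 3 m).filter Nat.Prime with hsdef
    have hps : p ∉ s := by
      simp only [hsdef, Finset.mem_filter, Finset.mem_Icc]
      rintro ⟨⟨-, h⟩, -⟩; omega
    have hsum_eq : (∑ ℓ ∈ s, (Q ℓ - 1/(ℓ:ℝ)^2)) = ∑ ℓ ∈ s, SP.indicator g ℓ := by
      refine Finset.sum_congr rfl fun ℓ hℓ => ?_
      simp only [hsdef, Finset.mem_filter, Finset.mem_Icc] at hℓ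
      rw [Set.indicator_of_mem (show ℓ ∈ SP from ⟨hℓ.2, hℓ.1.1⟩)]
    have hppos : 0 < SP.indicator g p := by
      rw [Set.indicator_of_mem (show p ∈ SP from ⟨hpp, by have := hpp.two_le; omega⟩)]
      exact sub_pos.mpr (Q_prime_gt hpp)
    have hT : (∑ ℓ ∈ s, (Q ℓ - 1/(ℓ:ℝ)^2)) < ∑' n, SP.indicator g n := by
      calc (∑ ℓ ∈ s, (Q ℓ - 1/(ℓ:ℝ)^2)) = ∑ ℓ ∈ s, SP.indicator g ℓ := hsum_eq
        _ < ∑ ℓ ∈ insert p s, SP.indicator g ℓ := by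
            rw [Finset.sum_insert hps]; linarith
        _ ≤ ∑' n, SP.indicator g n := Summable.sum_le_tsum _ (fun i _ => hgnonneg i) hsg
    rw [gt_iff_lt, eN, eD, hNval, hDval, hL m]
    rw [div_lt_div_iff₀ hden hden]
    have hkey : 3/2 * A * ((∑ ℓ ∈ s, (Q ℓ - 1/(ℓ:ℝ)^2)) + P2 - 1/4)
        < 3/2 * A * ((∑' n, SP.indicator g n) + (P2 - 1/4)) := by
      have h32 : (0:ℝ) < 3/2 * A := by positivity
      nlinarith
    nlinarith
  · intro m₁ m₂ h3 h12
    rw [hL, hL]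
    have hF : (∑ ℓ ∈ (Finset.Icc 3 m₁).filter Nat.Prime, (Q ℓ - 1/(ℓ:ℝ)^2))
        ≤ ∑ ℓ ∈ (Finset.Icc 3 m₂).filter Nat.Prime, (Q ℓ - 1/(ℓ:ℝ)^2) := by
      refine Finset.sum_le_sum_of_subset_of_nonneg
        (Finset.filter_subset_filter _ (Finset.Icc_subset_Icc_right h12)) ?_
      intro i hi _
      have hip : i.Prime := (Finset.mem_filter.mp hi).2
      exact le_of_lt (sub_pos.mpr (Q_prime_gt hip))
    rw [div_le_div_iff₀ hden hden]
    nlinarith [mul_nonneg (mul_nonneg (by linarith : (0:ℝ) ≤ 3/2*A) (le_of_lt hden))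
      (sub_nonneg.mpr hF)]
end
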